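/- Let z_1,...,z_n be independent Bernoulli random variables with parameters q_1,...,q_n, λ = Σ q_i, and ℓ a positive integer. Then min(λ, ℓ) - E[min(Σ z_i, ℓ)] ≤ (5/√ℓ) · min(λ, ℓ). -/

import Mathlib

open Finset Real

/-- Probability of the outcome `z` of `n` independent Bernoulli random variables with
parameters `q i`. -/
noncomputable def berWeight {n : ℕ} (q : Fin n → ℝ) (z : Fin n → Bool) : ℝ :=
  ∏ i, if z i then q i else 1 - q i

/-- Number of successes in outcome `z`. -/
def count {n : ℕ} (z : Fin n → Bool) : ℕ := ∑ i, if z i then 1 else 0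

/-- `Hber q ℓ = E[min(Σᵢ zᵢ, ℓ)]` for independent `zᵢ ~ Ber(q i)`. -/
noncomputable def Hber {n : ℕ} (q : Fin n → ℝ) (ℓ : ℕ) : ℝ :=
  ∑ z : Fin n → Bool, berWeight q z * min ((count z : ℝ)) (ℓ : ℝ)

/-- `Ptail q m = P[Σᵢ zᵢ ≥ m]` for independent `zᵢ ~ Ber(q i)`. -/
noncomputable def Ptail {n : ℕ} (q : Fin n → ℝ) (m : ℕ) : ℝ :=
  ∑ z ∈ Finset.univ.filter (fun z : Fin n → Bool => m ≤ count z), berWeight q z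

/-!
Let `X = Σ zᵢ`; it has mean `λ` and variance `Σ qᵢ(1 - qᵢ) ≤ λ`, and nothing else about `X` is
used. If `λ ≤ ℓ` the gap `min(λ, ℓ) - E[min(X, ℓ)]` equals `E[(X - ℓ)⁺]`, and if `ℓ ≤ λ` it equals
`E[(ℓ - X)⁺]`. A one-sided Chebyshev (Cantelli) estimate `y⁺ ≤ (y + c)² / (4c)`, with the shift
`c = |ℓ - λ| + √λ`, bounds either tail by `λ / (2 (|ℓ - λ| + √λ))`, which is at most
`min(λ, ℓ) / (2√ℓ)`.
-/

section MinMax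

variable {α : Type*} [AddCommGroup α] [LinearOrder α] [IsOrderedAddMonoid α]

lemma sub_min_self_left (a b : α) : a - min a b = max (a - b) 0 := by
  rcases le_total a b with h | h <;> simp [h]

lemma sub_min_self_right (a b : α) : b - min a b = max (b - a) 0 := by
  rw [min_comm, sub_min_self_left]

end MinMax

lemma max_zero_le_sq_div {y c : ℝ} (hc : 0 < c) : max y 0 ≤ (y + c) ^ 2 / (4 * c) := by
  rw [le_div_iff₀ (by positivity)]
  rcases le_total y 0 with hy | hy
  · rw [max_eq_right hy, zero_mul]; positivity
  · rw [max_eq_left hy]; nlinarith [sq_nonneg (y - c)]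

lemma sqrt_le_sub_add_sqrt {m ℓ : ℝ} (hm : 0 ≤ m) (hmℓ : m ≤ ℓ) (hℓ : 1 ≤ ℓ) :
    √ℓ ≤ ℓ - m + √m := by
  have hab : √m ≤ √ℓ := Real.sqrt_le_sqrt hmℓ
  have ha : 1 ≤ √ℓ := Real.one_le_sqrt.2 hℓ
  nlinarith [Real.sq_sqrt hm, Real.sq_sqrt (hm.trans hmℓ), mul_nonneg (sub_nonneg.2 hab)
    (by linarith [Real.sqrt_nonneg m] : 0 ≤ √ℓ + √m - 1)]

lemma mul_sqrt_le_mul_sub_add_sqrt {m ℓ : ℝ} (hℓm : ℓ ≤ m) (hℓ : 1 ≤ ℓ) :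
    m * √ℓ ≤ ℓ * (m - ℓ + √m) := by
  have hab : √ℓ ≤ √m := Real.sqrt_le_sqrt hℓm
  have ha : 1 ≤ √ℓ := Real.one_le_sqrt.2 hℓ
  nlinarith [Real.sq_sqrt (by linarith : (0 : ℝ) ≤ ℓ), Real.sq_sqrt (by linarith : (0 : ℝ) ≤ m),
    mul_nonneg (sub_nonneg.2 hab) (by nlinarith : 0 ≤ (√ℓ - 1) * (√m + √ℓ) + √ℓ)]

section WeightedSum

variable {ι : Type*} [Fintype ι] {w X : ι → ℝ}

lemma sum_mul_max_sub_le (hw0 : ∀ i, 0 ≤ w i) (hw1 : ∑ i, w i = 1) {μ v a : ℝ}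
    (hmean : ∑ i, w i * X i = μ) (hvar : ∑ i, w i * (X i - μ) ^ 2 ≤ v) (hv : 0 ≤ v)
    (hc : 0 < a - μ + √v) :
    ∑ i, w i * max (X i - a) 0 ≤ v / (2 * (a - μ + √v)) := by
  set c := a - μ + √v
  have hsq : ∑ i, w i * (X i - a + c) ^ 2 = ∑ i, w i * (X i - μ) ^ 2 +
      2 * √v * (∑ i, w i * X i - μ * ∑ i, w i) + v * ∑ i, w i := by
    simp only [mul_sum, ← sum_sub_distrib, ← sum_add_distrib]
    refine sum_congr rfl fun i _ => ?_
    rw [show X i - a + c = (X i - μ) + √v by ring, add_sq, Real.sq_sqrt hv]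
    ring
  calc ∑ i, w i * max (X i - a) 0 ≤ ∑ i, w i * ((X i - a + c) ^ 2 / (4 * c)) :=
        sum_le_sum fun i _ => mul_le_mul_of_nonneg_left (max_zero_le_sq_div hc) (hw0 i)
    _ = (∑ i, w i * (X i - a + c) ^ 2) / (4 * c) := by simp only [mul_div_assoc', sum_div]
    _ ≤ 2 * v / (4 * c) := by
        rw [hsq, hmean, hw1]
        gcongr
        linarith
    _ = v / (2 * c) := by field_simp; ring

lemma sub_sum_mul_min_le_of_le (hw0 : ∀ i, 0 ≤ w i) (hw1 : ∑ i, w i = 1) {m ℓ : ℝ}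
    (hmean : ∑ i, w i * X i = m) (hvar : ∑ i, w i * (X i - m) ^ 2 ≤ m) (hm : 0 ≤ m)
    (hmℓ : m ≤ ℓ) (hℓ : 1 ≤ ℓ) :
    m - ∑ i, w i * min (X i) ℓ ≤ m / (2 * √ℓ) := by
  have hgap := sqrt_le_sub_add_sqrt hm hmℓ hℓ
  calc m - ∑ i, w i * min (X i) ℓ = ∑ i, w i * max (X i - ℓ) 0 := by
        simp only [← hmean, ← sum_sub_distrib, ← mul_sub, sub_min_self_left]
    _ ≤ m / (2 * (ℓ - m + √m)) :=
        sum_mul_max_sub_le hw0 hw1 hmean hvar hm (by linarith [Real.one_le_sqrt.2 hℓ])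
    _ ≤ m / (2 * √ℓ) := by gcongr

lemma sub_sum_mul_min_le_of_ge (hw0 : ∀ i, 0 ≤ w i) (hw1 : ∑ i, w i = 1) {m ℓ : ℝ}
    (hmean : ∑ i, w i * X i = m) (hvar : ∑ i, w i * (X i - m) ^ 2 ≤ m)
    (hℓm : ℓ ≤ m) (hℓ : 1 ≤ ℓ) :
    ℓ - ∑ i, w i * min (X i) ℓ ≤ ℓ / (2 * √ℓ) := by
  have hm : 1 ≤ √m := Real.one_le_sqrt.2 (hℓ.trans hℓm)
  have hmean' : ∑ i, w i * -X i = -m := by simp [← hmean]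
  have hvar' : ∑ i, w i * (-X i - -m) ^ 2 ≤ m := by
    simpa only [show ∀ i, (-X i - -m) ^ 2 = (X i - m) ^ 2 from fun i => by ring] using hvar
  calc ℓ - ∑ i, w i * min (X i) ℓ = ∑ i, w i * max (-X i - -ℓ) 0 := by
        simp only [neg_sub_neg, ← sub_min_self_right, mul_sub, sum_sub_distrib, ← sum_mul, hw1,
          one_mul]
    _ ≤ m / (2 * (-ℓ - -m + √m)) :=
        sum_mul_max_sub_le hw0 hw1 hmean' hvar' (by linarith) (by linarith)
    _ ≤ ℓ / (2 * √ℓ) := by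
        rw [div_le_div_iff₀ (by linarith) (by positivity)]
        nlinarith [mul_sqrt_le_mul_sub_add_sqrt hℓm hℓ]

lemma min_sub_sum_mul_min_le (hw0 : ∀ i, 0 ≤ w i) (hw1 : ∑ i, w i = 1) {m ℓ : ℝ}
    (hmean : ∑ i, w i * X i = m) (hvar : ∑ i, w i * (X i - m) ^ 2 ≤ m) (hℓ : 1 ≤ ℓ) :
    min m ℓ - ∑ i, w i * min (X i) ℓ ≤ min m ℓ / (2 * √ℓ) := by
  rcases le_total m ℓ with hmℓ | hℓm
  · have hm : 0 ≤ m := hvar.trans' (sum_nonneg fun i _ => mul_nonneg (hw0 i) (sq_nonneg _))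
    rw [min_eq_left hmℓ]
    exact sub_sum_mul_min_le_of_le hw0 hw1 hmean hvar hm hmℓ hℓ
  · rw [min_eq_right hℓm]
    exact sub_sum_mul_min_le_of_ge hw0 hw1 hmean hvar hℓm hℓ

end WeightedSum

section Bernoulli

variable {n : ℕ} (q : Fin n → ℝ)

lemma berWeight_nonneg {q : Fin n → ℝ} (hq : ∀ i, q i ∈ Set.Icc (0 : ℝ) 1) (z : Fin n → Bool) :
    0 ≤ berWeight q z :=
  prod_nonneg fun i _ => by
    obtain ⟨h0, h1⟩ := hq i
    split <;> linarith

lemma sum_berWeight_mul_prod (s : Finset (Fin n)) (f : Fin n → Bool → ℝ) :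
    ∑ z, berWeight q z * ∏ k ∈ s, f k (z k) =
      ∏ k ∈ s, (q k * f k true + (1 - q k) * f k false) := by
  have hs : ∀ g : Fin n → ℝ, ∏ k ∈ s, g k = ∏ k, if k ∈ s then g k else 1 := fun g => by
    rw [prod_ite_mem, univ_inter]
  simp only [berWeight, hs, ← prod_mul_distrib]
  rw [← Fintype.prod_sum fun k b => (if b then q k else 1 - q k) * if k ∈ s then f k b else 1]
  refine prod_congr rfl fun k _ => ?_
  split_ifs <;> simp

lemma sum_berWeight : ∑ z, berWeight q z = 1 := by
  simpa using sum_berWeight_mul_prod q ∅ fun _ _ => 1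

lemma sum_berWeight_mul_centered (i : Fin n) :
    ∑ z, berWeight q z * ((if z i then 1 else 0) - q i) = 0 := by
  have := sum_berWeight_mul_prod q {i} fun k b => (if b then 1 else 0) - q k
  simp only [prod_singleton] at this
  rw [this]
  simp only [if_true, Bool.false_eq_true, if_false]
  ring

lemma sum_berWeight_mul_centered_mul_centered (i j : Fin n) :
    ∑ z, berWeight q z * (((if z i then 1 else 0) - q i) * ((if z j then 1 else 0) - q j)) =
      if i = j then q i * (1 - q i) else 0 := by
  split_ifs with hij
  · subst hij
    have := sum_berWeight_mul_prod q {i} fun k b => ((if b then 1 else 0) - q k) ^ 2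
    simp only [prod_singleton, sq] at this
    rw [this]
    simp only [if_true, Bool.false_eq_true, if_false]
    ring
  · have := sum_berWeight_mul_prod q {i, j} fun k b => (if b then 1 else 0) - q k
    simp only [prod_pair hij] at this
    rw [this]
    simp only [if_true, Bool.false_eq_true, if_false]
    ring

lemma count_cast_sub_sum (z : Fin n → Bool) :
    (count z : ℝ) - ∑ i, q i = ∑ i, ((if z i then 1 else 0) - q i) := by
  simp [count, sum_sub_distrib]

lemma sum_berWeight_mul_count : ∑ z, berWeight q z * (count z : ℝ) = ∑ i, q i := by
  have h : ∑ z, berWeight q z * ((count z : ℝ) - ∑ i, q i) = 0 := by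
    simp only [count_cast_sub_sum, mul_sum]
    rw [sum_comm]
    exact sum_eq_zero fun i _ => sum_berWeight_mul_centered q i
  simpa [mul_sub, sum_sub_distrib, ← sum_mul, sum_berWeight, sub_eq_zero] using h

lemma sum_berWeight_mul_count_sub_sq :
    ∑ z, berWeight q z * ((count z : ℝ) - ∑ i, q i) ^ 2 = ∑ i, q i * (1 - q i) := by
  simp only [count_cast_sub_sum, sq, sum_mul_sum]
  simp only [mul_sum]
  rw [sum_comm]
  refine sum_congr rfl fun i _ => ?_
  rw [sum_comm]
  simp [sum_berWeight_mul_centered_mul_centered]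

lemma sum_berWeight_mul_count_sub_sq_le :
    ∑ z, berWeight q z * ((count z : ℝ) - ∑ i, q i) ^ 2 ≤ ∑ i, q i := by
  rw [sum_berWeight_mul_count_sub_sq]
  exact sum_le_sum fun i _ => by nlinarith [sq_nonneg (q i)]

end Bernoulli

/-- For independent `z_i ~ Ber(q_i)` with `λ = Σ q_i` and a positive integer `ℓ`,
`min(λ, ℓ) - E[min(Σ z_i, ℓ)] ≤ (5/√ℓ) · min(λ, ℓ)`. -/
theorem hcher_sub_hber_sqrt_ell (n : ℕ) (q : Fin n → ℝ) (hq : ∀ i, q i ∈ Set.Icc (0 : ℝ) 1)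
    (lam : ℝ) (hlam : lam = ∑ i, q i) (ℓ : ℕ) (hℓ : 1 ≤ ℓ) :
    min lam (ℓ : ℝ) - Hber q ℓ ≤ 5 / Real.sqrt (ℓ : ℝ) * min lam (ℓ : ℝ) := by
  subst hlam
  have hℓ' : (1 : ℝ) ≤ ℓ := by exact_mod_cast hℓ
  have hmin : 0 ≤ min (∑ i, q i) (ℓ : ℝ) :=
    le_min (sum_nonneg fun i _ => (hq i).1) (by positivity)
  calc min (∑ i, q i) (ℓ : ℝ) - Hber q ℓ ≤ min (∑ i, q i) (ℓ : ℝ) / (2 * √ℓ) :=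
        min_sub_sum_mul_min_le (berWeight_nonneg hq) (sum_berWeight q)
          (sum_berWeight_mul_count q) (sum_berWeight_mul_count_sub_sq_le q) hℓ'
    _ ≤ 5 / √ℓ * min (∑ i, q i) (ℓ : ℝ) := by
        rw [div_mul_eq_mul_div, div_le_div_iff₀ (by positivity) (by positivity)]
        nlinarith [Real.sqrt_nonneg (ℓ : ℝ)]
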